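/- arXiv:2112.04166 — 8 statements merged into one kernel-verified Lean document; each statement's English description precedes it below -/
import Mathlib

section
/- For every instance and every x ∈ [0,1], there exists an allocation satisfying WEF(x, 1−x). -/
open Finset

/-- An allocation: a partition of the item set `Fin m` into `n` (possibly empty) bundles. -/
def IsAllocation {n m : ℕ} (A : Fin n → Finset (Fin m)) : Prop :=
  (∀ i j : Fin n, i ≠ j → Disjoint (A i) (A j)) ∧
    Finset.univ.biUnion A = (Finset.univ : Finset (Fin m))

/-- Additive utility of agent `i` for a bundle `S`. -/
def util {n m : ℕ} (u : Fin n → Fin m → ℝ) (i : Fin n) (S : Finset (Fin m)) : ℝ :=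
  ∑ g ∈ S, u i g

/-- Weighted envy-freeness up to (x, y)-fraction of one item. -/
def WEF {n m : ℕ} (w : Fin n → ℝ) (u : Fin n → Fin m → ℝ) (A : Fin n → Finset (Fin m))
    (x y : ℝ) : Prop :=
  ∀ i j : Fin n, ∃ B : Finset (Fin m), B ⊆ A j ∧ B.card ≤ 1 ∧
    (util u i (A i) + y * util u i B) / w i ≥ (util u i (A j) - x * util u i B) / w j

/-- Weighted proportionality up to (x, y)-fraction of one item. -/
def WPROP {n m : ℕ} (w : Fin n → ℝ) (u : Fin n → Fin m → ℝ) (A : Fin n → Finset (Fin m))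
    (x y : ℝ) : Prop :=
  ∀ i : Fin n, ∃ B : Finset (Fin m), B ⊆ Finset.univ \ A i ∧ B.card ≤ 1 ∧
    (util u i (A i) + y * util u i B) / w i ≥
      (util u i Finset.univ - (n : ℝ) * x * util u i B) / (∑ j, w j)

/-- The stronger notion WPROP*(x,y). -/
def WPROPstar {n m : ℕ} (w : Fin n → ℝ) (u : Fin n → Fin m → ℝ) (A : Fin n → Finset (Fin m))
    (x y : ℝ) : Prop :=
  ∀ i : Fin n, ∃ B : Finset (Fin m), B ⊆ Finset.univ \ A i ∧ B.card ≤ 1 ∧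
    ∃ Bf : Fin n → Finset (Fin m),
      (∀ j : Fin n, j ≠ i → Bf j ⊆ A j ∧ (Bf j).card ≤ 1) ∧
      (util u i (A i) + y * util u i B) / w i ≥
        (util u i Finset.univ - x * ∑ j ∈ Finset.univ.erase i, util u i (Bf j)) / (∑ j, w j)

/-- The (1-out-of-n) maximin share of agent `i`. -/
noncomputable def MMS {n m : ℕ} (u : Fin n → Fin m → ℝ) (i : Fin n) : ℝ :=
  sSup {v : ℝ | ∃ Z : Fin n → Finset (Fin m), IsAllocation Z ∧ v = ⨅ j, util u i (Z j)}

/-- The normalized maximin share of agent `i`. -/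
noncomputable def NMMS {n m : ℕ} (w : Fin n → ℝ) (u : Fin n → Fin m → ℝ) (i : Fin n) : ℝ :=
  (w i / ∑ j, w j) * (n : ℝ) * MMS u i

/-- The weighted maximin share of agent `i`. -/
noncomputable def WMMS {n m : ℕ} (w : Fin n → ℝ) (u : Fin n → Fin m → ℝ) (i : Fin n) : ℝ :=
  w i * sSup {v : ℝ | ∃ Z : Fin n → Finset (Fin m), IsAllocation Z ∧
    v = ⨅ j, util u i (Z j) / w j}

/-!
Agents pick items one at a time: with `y = 1 - x`, the agent `p` minimising `(|A_p| + y) / w_p`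
takes her favourite remaining item. Fix agents `i, j` and a threshold `θ`, and let `a, b` count the
items of `A_j`, `A_i` that `i` values above `θ`. When `j` takes the `a`-th of her items above `θ`,
every item `i` already holds beats it, so the picking rule gives `w_i (a - 1 + y) ≤ w_j (b + y)`.
Integrating this count inequality over `θ` (layer-cake formula) gives WEF(x, 1 - x), the removed
item being the one of `A_j` that `i` values most.
-/

open MeasureTheory

section LayerCake
variable {α : Type*}

lemma natCast_card_filter_lt_eq_sum_indicator (s : Finset α) (f : α → ℝ) (θ : ℝ) :
    (#{a ∈ s | θ < f a} : ℝ) = ∑ a ∈ s, (Set.Iio (f a)).indicator 1 θ := by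
  simp only [natCast_card_filter, Set.indicator_apply, Set.mem_Iio, Pi.one_apply]

lemma integrableOn_Ioi_indicator_Iio (c : ℝ) :
    IntegrableOn ((Set.Iio c).indicator (1 : ℝ → ℝ)) (Set.Ioi 0) := by
  refine (integrable_indicator_iff measurableSet_Iio).2 (integrableOn_const ?_)
  rw [Measure.restrict_apply measurableSet_Iio, Set.Iio_inter_Ioi]
  exact measure_Ioo_lt_top.ne

lemma integrableOn_Ioi_card_filter_lt (s : Finset α) (f : α → ℝ) :
    IntegrableOn (fun θ => (#{a ∈ s | θ < f a} : ℝ)) (Set.Ioi 0) := by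
  simp_rw [natCast_card_filter_lt_eq_sum_indicator]
  exact integrable_finsetSum _ fun a _ => integrableOn_Ioi_indicator_Iio (f a)

lemma integral_Ioi_card_filter_lt (s : Finset α) {f : α → ℝ} (hf : ∀ a, 0 ≤ f a) :
    ∫ θ in Set.Ioi 0, (#{a ∈ s | θ < f a} : ℝ) = ∑ a ∈ s, f a := by
  simp_rw [natCast_card_filter_lt_eq_sum_indicator]
  rw [integral_finsetSum _ fun a _ => integrableOn_Ioi_indicator_Iio (f a)]
  refine sum_congr rfl fun a _ => ?_
  rw [integral_indicator_one measurableSet_Iio, measureReal_restrict_apply measurableSet_Iio,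
    Set.Iio_inter_Ioi, Real.volume_real_Ioo_of_le (hf a), sub_zero]

lemma sum_le_of_forall_card_filter_lt (s t t' : Finset α) {f : α → ℝ} (hf : ∀ a, 0 ≤ f a)
    (p q r : ℝ) (h : ∀ θ, 0 < θ → p * #{a ∈ s | θ < f a} ≤
      q * #{a ∈ t | θ < f a} + r * #{a ∈ t' | θ < f a}) :
    p * ∑ a ∈ s, f a ≤ q * ∑ a ∈ t, f a + r * ∑ a ∈ t', f a := by
  have hs := (integrableOn_Ioi_card_filter_lt s f).const_mul p
  have ht := (integrableOn_Ioi_card_filter_lt t f).const_mul q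
  have ht' := (integrableOn_Ioi_card_filter_lt t' f).const_mul r
  rw [← integral_Ioi_card_filter_lt s hf, ← integral_Ioi_card_filter_lt t hf,
    ← integral_Ioi_card_filter_lt t' hf, ← integral_const_mul, ← integral_const_mul,
    ← integral_const_mul, ← integral_add ht ht']
  exact setIntegral_mono_on hs (ht.add ht') measurableSet_Ioi h

end LayerCake

lemma Finset.exists_subset_card_le_one_forall_le {α β : Type*} [LinearOrder β] (s : Finset α)
    (f : α → β) : ∃ t ⊆ s, #t ≤ 1 ∧ ∀ a ∈ s, ∃ b ∈ t, f a ≤ f b := by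
  rcases s.eq_empty_or_nonempty with rfl | hs
  · exact ⟨∅, subset_refl _, by simp, by simp⟩
  · obtain ⟨b, hb, hmax⟩ := s.exists_max_image f hs
    exact ⟨{b}, singleton_subset_iff.2 hb, by simp,
      fun a ha => ⟨b, mem_singleton_self b, hmax a ha⟩⟩

section PickingSequence
variable {n m : ℕ}

def bundle (o : Fin m → Option (Fin n)) (i : Fin n) : Finset (Fin m) := {g | o g = some i}

lemma bundle_update_self (o : Fin m → Option (Fin n)) (g : Fin m) (p : Fin n) :
    bundle (Function.update o g (some p)) p = insert g (bundle o p) := by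
  ext g'
  by_cases h : g' = g <;> simp [bundle, Function.update_apply, h]

lemma bundle_update_of_ne (o : Fin m → Option (Fin n)) {g : Fin m} (hg : o g = none) {p q : Fin n}
    (hqp : q ≠ p) : bundle (Function.update o g (some p)) q = bundle o q := by
  ext g'
  by_cases h : g' = g <;> simp [bundle, Function.update_apply, h, hg, Ne.symm hqp]

lemma bundle_subset_bundle_update (o : Fin m → Option (Fin n)) {g : Fin m} (hg : o g = none)
    (p q : Fin n) : bundle o q ⊆ bundle (Function.update o g (some p)) q := by
  rcases eq_or_ne q p with rfl | hqp
  · rw [bundle_update_self]; exact subset_insert _ _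
  · rw [bundle_update_of_ne o hg hqp]

lemma isAllocation_bundle {o : Fin m → Option (Fin n)} (ho : ∀ g, o g ≠ none) :
    IsAllocation (bundle o) := by
  refine ⟨fun i j hij => disjoint_left.2 fun g hi hj => hij ?_, eq_univ_of_forall fun g => ?_⟩
  · simp only [bundle, mem_filter, mem_univ, true_and] at hi hj
    exact Option.some_injective _ (hi.symm.trans hj)
  · obtain ⟨i, hi⟩ := Option.ne_none_iff_exists'.1 (ho g)
    exact mem_biUnion.2 ⟨i, mem_univ i, by simp [bundle, hi]⟩

variable (w : Fin n → ℝ) (u : Fin n → Fin m → ℝ) (y : ℝ)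

structure IsPickingState (o : Fin m → Option (Fin n)) : Prop where
  le_of_assigned : ∀ i g h, o h = some i → o g = none → u i g ≤ u i h
  count_le : ∀ i j θ, 0 < #{g ∈ bundle o j | θ < u i g} →
    w i * (#{g ∈ bundle o j | θ < u i g} - 1 + y) ≤
      w j * (#{g ∈ bundle o i | θ < u i g} + y)

variable {w u y}

lemma isPickingState_none : IsPickingState w u y fun _ => none :=
  ⟨fun _ _ _ h => by simp at h, fun i j θ h => by simp [bundle] at h⟩

lemma IsPickingState.pick {o : Fin m → Option (Fin n)} (ho : IsPickingState w u y o)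
    (hw : ∀ i, 0 < w i) {p : Fin n} {g : Fin m} (hg : o g = none)
    (hp : ∀ q, w q * (#(bundle o p) + y) ≤ w p * (#(bundle o q) + y))
    (hmax : ∀ g', o g' = none → u p g' ≤ u p g) :
    IsPickingState w u y (Function.update o g (some p)) := by
  refine ⟨fun i g' h hh hg' => ?_, fun i j θ hpos => ?_⟩
  · have hg'g : g' ≠ g := by rintro rfl; simp at hg'
    rw [Function.update_of_ne hg'g] at hg'
    by_cases hhg : h = g
    · subst hhg
      obtain rfl : p = i := by simpa using hh
      exact hmax g' hg'
    · exact ho.le_of_assigned i g' h (by rwa [Function.update_of_ne hhg] at hh) hg'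
  have hi : (#{h ∈ bundle o i | θ < u i h} : ℝ) ≤
      #{h ∈ bundle (Function.update o g (some p)) i | θ < u i h} := by
    exact_mod_cast card_le_card (filter_subset_filter _ (bundle_subset_bundle_update o hg p i))
  rcases eq_or_ne j p with rfl | hjp
  · by_cases hθ : θ < u i g
    · rcases eq_or_ne i j with rfl | hij
      · nlinarith [hw i]
      · -- `g` is worth more than `θ` to `i`, hence so is every item `i` took before it.
        have hall : {h ∈ bundle o i | θ < u i h} = bundle o i := filter_true_of_mem fun h hh =>
          hθ.trans_le (ho.le_of_assigned i g h (by simpa [bundle] using hh) hg)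
        have hj : (#{h ∈ bundle (Function.update o g (some j)) j | θ < u i h} : ℝ) ≤
            #(bundle o j) + 1 := by
          rw [bundle_update_self]
          exact_mod_cast (card_filter_le _ _).trans (card_insert_le _ _)
        rw [bundle_update_of_ne o hg hij, hall]
        nlinarith [hp i, hw i]
    · have hj : {h ∈ bundle (Function.update o g (some j)) j | θ < u i h} =
          {h ∈ bundle o j | θ < u i h} := by
        rw [bundle_update_self, filter_insert, if_neg hθ]
      rw [hj] at hpos ⊢
      nlinarith [ho.count_le i j θ hpos, hw j]
  · rw [bundle_update_of_ne o hg hjp] at hpos ⊢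
    nlinarith [ho.count_le i j θ hpos, hw j]

lemma IsPickingState.exists_complete [Nonempty (Fin n)] {o : Fin m → Option (Fin n)}
    (ho : IsPickingState w u y o) (hw : ∀ i, 0 < w i) :
    ∃ o', IsPickingState w u y o' ∧ ∀ g, o' g ≠ none := by
  obtain ⟨k, hk⟩ : ∃ k, #{g | o g = none} = k := ⟨_, rfl⟩
  induction k generalizing o with
  | zero => exact ⟨o, ho, fun g => filter_eq_empty_iff.1 (card_eq_zero.1 hk) (mem_univ g)⟩
  | succ k ih =>
    obtain ⟨p, -, hp⟩ :=
      exists_min_image univ (fun q => (#(bundle o q) + y) / w q) univ_nonempty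
    obtain ⟨g, hg, hmax⟩ := exists_max_image {g | o g = none} (u p) (card_pos.1 (by omega))
    rw [mem_filter] at hg
    refine ih (ho.pick hw hg.2 (fun q => ?_) (fun g' hg' => hmax g' (by simpa using hg'))) ?_
    · have := hp q (mem_univ q)
      rwa [div_le_div_iff₀ (hw p) (hw q), mul_comm, mul_comm _ (w p)] at this
    · have : ({g' | Function.update o g (some p) g' = none} : Finset (Fin m)) =
          ({g' | o g' = none} : Finset (Fin m)).erase g := by
        ext g'
        by_cases h : g' = g <;> simp [Function.update_apply, h]
      rw [this, card_erase_of_mem (by simpa using hg.2), hk, Nat.add_sub_cancel]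

lemma IsPickingState.wef {x : ℝ} {o : Fin m → Option (Fin n)}
    (ho : IsPickingState w u (1 - x) o) (hw : ∀ i, 0 < w i) (hu : ∀ i g, 0 ≤ u i g)
    (hx : x ∈ Set.Icc (0 : ℝ) 1) :
    WEF w u (bundle o) x (1 - x) := by
  intro i j
  obtain ⟨B, hBj, hB, hBmax⟩ := (bundle o j).exists_subset_card_le_one_forall_le (u i)
  refine ⟨B, hBj, hB, ?_⟩
  have hr : 0 ≤ w i * x + w j * (1 - x) := by nlinarith [hw i, hw j, hx.1, hx.2]
  have key : w i * util u i (bundle o j) ≤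
      w j * util u i (bundle o i) + (w i * x + w j * (1 - x)) * util u i B := by
    refine sum_le_of_forall_card_filter_lt _ _ _ (hu i) _ _ _ fun θ _ => ?_
    rcases (#{g ∈ bundle o j | θ < u i g}).eq_zero_or_pos with h0 | hpos
    · rw [h0, Nat.cast_zero, mul_zero]
      exact add_nonneg (mul_nonneg (hw j).le (Nat.cast_nonneg _))
        (mul_nonneg hr (Nat.cast_nonneg _))
    · have hBθ : (1 : ℝ) ≤ #{b ∈ B | θ < u i b} := by
        obtain ⟨g, hg⟩ := card_pos.1 hpos
        rw [mem_filter] at hg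
        obtain ⟨b, hb, hgb⟩ := hBmax g hg.1
        exact_mod_cast card_pos.2 ⟨b, mem_filter.2 ⟨hb, hg.2.trans_le hgb⟩⟩
      nlinarith [ho.count_le i j θ hpos]
  rw [ge_iff_le, div_le_div_iff₀ (hw j) (hw i)]
  linarith

end PickingSequence

/-- For every instance and every x ∈ [0,1], there exists an allocation satisfying WEF(x, 1−x). -/
theorem wef_x_one_sub_x_exists (n m : ℕ) (hn : 2 ≤ n)
    (w : Fin n → ℝ) (hw : ∀ i, 0 < w i)
    (u : Fin n → Fin m → ℝ) (hu : ∀ i g, 0 ≤ u i g)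
    (x : ℝ) (hx : x ∈ Set.Icc (0 : ℝ) 1) :
    ∃ A : Fin n → Finset (Fin m), IsAllocation A ∧ WEF w u A x (1 - x) := by
  have : Nonempty (Fin n) := ⟨⟨0, by omega⟩⟩
  obtain ⟨o, ho, hcomplete⟩ := isPickingState_none.exists_complete (y := 1 - x) hw
  exact ⟨bundle o, isAllocation_bundle hcomplete, ho.wef hw hu hx⟩
end

section
/- For all x, y ∈ [0,1] and every y' ∈ [0,1] with y' ≥ (1 − (min_{i ∈ N} w_i)/w_N)·y, every allocation satisfying WEF(x,y) also satisfies WPROP*(x,y'). -/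
open Finset

/-! Fix agent `i`. WEF gives, for every `j ≠ i`, an item `B j ⊆ A j` with
`(u_i(A_j) - x u_i(B_j)) / w_j ≤ (u_i(A_i) + y u_i(B_j)) / w_i`. Bounding every `u_i(B_j)` on the right
by the largest one, `b = u_i(B_k)`, and summing these inequalities weighted by `w_j` gives
`(u_i(M) - x Σ_{j ≠ i} u_i(B_j)) w_i ≤ u_i(A_i) w_N + y b (w_N - w_i)`, and
`y (w_N - w_i) ≤ y' w_N` by the choice of `y'`. So `B_k`, which lies outside `A_i`, witnesses WPROP*. -/

theorem util_nonneg {n m : ℕ} {u : Fin n → Fin m → ℝ} {i : Fin n} (hu : ∀ g, 0 ≤ u i g)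
    (S : Finset (Fin m)) : 0 ≤ util u i S :=
  sum_nonneg fun g _ => hu g

namespace IsAllocation

variable {n m : ℕ} {A : Fin n → Finset (Fin m)}

theorem sum_util (hA : IsAllocation A) (u : Fin n → Fin m → ℝ) (i : Fin n) :
    ∑ j, util u i (A j) = util u i univ := by
  rw [← hA.2, util, sum_biUnion fun p _ q _ hpq => hA.1 p q hpq]
  rfl

theorem subset_sdiff_of_subset {B : Finset (Fin m)} {i j : Fin n} (hA : IsAllocation A)
    (hB : B ⊆ A j) (hji : j ≠ i) : B ⊆ univ \ A i := fun g hg =>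
  mem_sdiff.2 ⟨mem_univ g, disjoint_left.1 (hA.1 j i hji) (hB hg)⟩

end IsAllocation

theorem sum_mul_le_mul_sum_of_div_le {ι : Type*} (s : Finset ι) {f w : ι → ℝ} {c d : ℝ}
    (hw : ∀ j ∈ s, 0 < w j) (hd : 0 < d) (h : ∀ j ∈ s, f j / w j ≤ c / d) :
    (∑ j ∈ s, f j) * d ≤ c * ∑ j ∈ s, w j := by
  rw [sum_mul, mul_sum]
  exact sum_le_sum fun j hj => (div_le_div_iff₀ (hw j hj) hd).1 (h j hj)

theorem mul_sub_le_of_one_sub_div_mul_le {y y' W m v : ℝ} (hW : 0 < W) (hy : 0 ≤ y)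
    (hm : m ≤ v) (h : (1 - m / W) * y ≤ y') : y * (W - v) ≤ y' * W :=
  calc y * (W - v) ≤ y * (W - m) := by gcongr
    _ = (1 - m / W) * y * W := by field_simp
    _ ≤ y' * W := by gcongr

theorem wef_implies_wpropstar_general (n m : ℕ) (hn : 2 ≤ n)
    (w : Fin n → ℝ) (hw : ∀ i, 0 < w i)
    (u : Fin n → Fin m → ℝ) (hu : ∀ i g, 0 ≤ u i g)
    (x y y' : ℝ) (hy : y ∈ Set.Icc (0 : ℝ) 1)
    (hyy' : y' ≥ (1 - (⨅ i, w i) / ∑ i, w i) * y)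
    (A : Fin n → Finset (Fin m)) (hA : IsAllocation A)
    (hWEF : WEF w u A x y) :
    WPROPstar w u A x y' := by
  intro i
  choose B hBA hBcard hBenvy using hWEF i
  have hothers : (univ.erase i).Nonempty :=
    (univ_nontrivial_iff.2 (Fin.nontrivial_iff_two_le.2 hn)).erase_nonempty
  obtain ⟨k, hk, hkmax⟩ := exists_max_image (univ.erase i) (fun j => util u i (B j)) hothers
  refine ⟨B k, hA.subset_sdiff_of_subset (hBA k) (ne_of_mem_erase hk), hBcard k, B,
    fun j _ => ⟨hBA j, hBcard j⟩, ?_⟩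
  have hW : 0 < ∑ j, w j := sum_pos (fun j _ => hw j) ⟨i, mem_univ i⟩
  have henvy : ∀ j ∈ univ.erase i, (util u i (A j) - x * util u i (B j)) / w j ≤
      (util u i (A i) + y * util u i (B k)) / w i := fun j hj =>
    (hBenvy j).trans (by gcongr; exacts [(hw i).le, hy.1, hkmax j hj])
  have hsum := sum_mul_le_mul_sum_of_div_le _ (fun j _ => hw j) (hw i) henvy
  have hscale := mul_sub_le_of_one_sub_div_mul_le hW hy.1
    (ciInf_le (Set.finite_range w).bddBelow i) hyy'
  have hb := util_nonneg (hu i) (B k)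
  rw [sum_sub_distrib, ← mul_sum, sum_erase_eq_sub (f := w) (mem_univ i)] at hsum
  rw [ge_iff_le, div_le_div_iff₀ hW (hw i), ← hA.sum_util, ← add_sum_erase _ _ (mem_univ i)]
  nlinarith [mul_le_mul_of_nonneg_right hscale hb]

/-- WEF(x,y) implies WPROP*(x,y') whenever y' ≥ (1 − (min_i w_i)/w_N)·y. -/
theorem wef_implies_wpropstar (n m : ℕ) (hn : 2 ≤ n)
    (w : Fin n → ℝ) (hw : ∀ i, 0 < w i)
    (u : Fin n → Fin m → ℝ) (hu : ∀ i g, 0 ≤ u i g)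
    (x y y' : ℝ) (hx : x ∈ Set.Icc (0 : ℝ) 1) (hy : y ∈ Set.Icc (0 : ℝ) 1)
    (hy' : y' ∈ Set.Icc (0 : ℝ) 1)
    (hyy' : y' ≥ (1 - (⨅ i, w i) / ∑ i, w i) * y)
    (A : Fin n → Finset (Fin m)) (hA : IsAllocation A)
    (hWEF : WEF w u A x y) :
    WPROPstar w u A x y' :=
  wef_implies_wpropstar_general n m hn w hw u hu x y y' hy hyy' A hA hWEF
end

section
/- For all x, y ∈ [0,1], every allocation satisfying WEF(x,y) also satisfies WPROP(x,y). -/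
open Finset

/-! Fix an agent `i`. For every other agent `j`, WEF supplies an item `B j ⊆ A j` with
`(u_i(A_j) - x·u_i(B j))/w_j ≤ (u_i(A_i) + y·u_i(B j))/w_i`; take `B i = ∅`. As `x, y ≥ 0`,
these inequalities stay true when every `u_i(B j)` is replaced by the largest one, `β`, and
the mediant inequality applied to `(u_i(A_j) - x·β)/w_j ≤ (u_i(A_i) + y·β)/w_i` gives
`(u_i(M) - n·x·β)/w_N ≤ (u_i(A_i) + y·β)/w_i`. -/

theorem Finset.sum_div_sum_le_of_forall_div_le {ι : Type*} {s : Finset ι} (hs : s.Nonempty)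
    {p w : ι → ℝ} {r : ℝ} (hw : ∀ j ∈ s, 0 < w j) (h : ∀ j ∈ s, p j / w j ≤ r) :
    (∑ j ∈ s, p j) / ∑ j ∈ s, w j ≤ r := by
  rw [div_le_iff₀ (sum_pos hw hs), mul_sum]
  exact sum_le_sum fun j hj => (div_le_iff₀ (hw j hj)).1 (h j hj)

theorem util_univ_eq_sum {n m : ℕ} {A : Fin n → Finset (Fin m)} (hA : IsAllocation A)
    (u : Fin n → Fin m → ℝ) (i : Fin n) : util u i univ = ∑ j, util u i (A j) := by
  rw [util, ← hA.2, sum_biUnion fun j _ k _ hjk => hA.1 j k hjk]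
  rfl

theorem WEF.exists_forall_div_le {n m : ℕ} {w : Fin n → ℝ} {u : Fin n → Fin m → ℝ}
    {A : Fin n → Finset (Fin m)} {x y : ℝ} (hWEF : WEF w u A x y) (hA : IsAllocation A)
    (i : Fin n) :
    ∃ B : Fin n → Finset (Fin m), ∀ j, B j ⊆ univ \ A i ∧ (B j).card ≤ 1 ∧
      (util u i (A j) - x * util u i (B j)) / w j ≤
        (util u i (A i) + y * util u i (B j)) / w i := by
  choose B hBA hBcard hB using hWEF i
  refine ⟨Function.update B i ∅, fun j => ?_⟩
  rcases eq_or_ne j i with rfl | hji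
  · simp [util]
  · rw [Function.update_of_ne hji]
    refine ⟨fun g hg => mem_sdiff.2 ⟨mem_univ g, ?_⟩, hBcard j, hB j⟩
    exact disjoint_left.1 (hA.1 j i hji) (hBA j hg)

theorem wef_implies_wprop_general (n m : ℕ)
    (w : Fin n → ℝ) (hw : ∀ i, 0 < w i)
    (u : Fin n → Fin m → ℝ)
    (x y : ℝ) (hx : x ∈ Set.Icc (0 : ℝ) 1) (hy : y ∈ Set.Icc (0 : ℝ) 1)
    (A : Fin n → Finset (Fin m)) (hA : IsAllocation A)
    (hWEF : WEF w u A x y) :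
    WPROP w u A x y := by
  intro i
  obtain ⟨B, hB⟩ := hWEF.exists_forall_div_le hA i
  obtain ⟨k, -, hk⟩ := exists_max_image univ (fun j => util u i (B j)) ⟨i, mem_univ i⟩
  obtain ⟨hBk, hBk_card, -⟩ := hB k
  refine ⟨B k, hBk, hBk_card, ?_⟩
  have hsum : util u i univ - n * x * util u i (B k) =
      ∑ j, (util u i (A j) - x * util u i (B k)) := by
    simp [sum_sub_distrib, util_univ_eq_sum hA, mul_assoc]
  rw [hsum, ge_iff_le]
  refine sum_div_sum_le_of_forall_div_le ⟨i, mem_univ i⟩ (fun j _ => hw j) fun j _ => ?_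
  have hBj := hk j (mem_univ j)
  calc (util u i (A j) - x * util u i (B k)) / w j
      ≤ (util u i (A j) - x * util u i (B j)) / w j := by gcongr; exacts [(hw j).le, hx.1]
    _ ≤ (util u i (A i) + y * util u i (B j)) / w i := (hB j).2.2
    _ ≤ (util u i (A i) + y * util u i (B k)) / w i := by gcongr; exacts [(hw i).le, hy.1]

/-- WEF(x,y) implies WPROP(x,y). -/
theorem wef_implies_wprop (n m : ℕ) (hn : 2 ≤ n)
    (w : Fin n → ℝ) (hw : ∀ i, 0 < w i)
    (u : Fin n → Fin m → ℝ) (hu : ∀ i g, 0 ≤ u i g)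
    (x y : ℝ) (hx : x ∈ Set.Icc (0 : ℝ) 1) (hy : y ∈ Set.Icc (0 : ℝ) 1)
    (A : Fin n → Finset (Fin m)) (hA : IsAllocation A)
    (hWEF : WEF w u A x y) :
    WPROP w u A x y :=
  wef_implies_wprop_general n m w hw u x y hx hy A hA hWEF
end

section
/- For any x, x', y, y' ∈ [0,1] such that x' + y < 1 or x + y' < 1, there exists an instance in which all items are identical and no allocation satisfies both WPROP(x,y) and WPROP(x',y'). -/
open Finset

/-!
With identical items, WPROP(x, y) forces every agent's bundle to satisfy
`w_i (m - n x) ≤ (|A_i| + y) W`. Take one heavy agent of weight `v` and `k` light agents of weight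
`1`, with `k` and then `m` large. WPROP(x, y) leaves no light agent empty-handed, so the heavy agent
receives at most `m - k` items, which is too few for WPROP(x', y') once `k (1 - x' - y)` exceeds
`x' + y'` by a margin.
-/

lemma util_one {n m : ℕ} (i : Fin n) (S : Finset (Fin m)) :
    util (fun _ _ => (1 : ℝ)) i S = S.card := by
  simp [util]

lemma IsAllocation.sum_card {n m : ℕ} {A : Fin n → Finset (Fin m)} (hA : IsAllocation A) :
    ∑ i, (A i).card = m := by
  rw [← card_biUnion fun i _ j _ hij => hA.1 i j hij, hA.2, card_univ, Fintype.card_fin]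

lemma IsAllocation.card_zero_add_le {k m : ℕ} {A : Fin (k + 1) → Finset (Fin m)}
    (hA : IsAllocation A) (hne : ∀ j : Fin k, (A j.succ).Nonempty) : (A 0).card + k ≤ m := by
  have hk : k ≤ ∑ j : Fin k, (A j.succ).card := by
    simpa using card_nsmul_le_sum univ (fun j : Fin k => (A j.succ).card) 1
      fun j _ => (hne j).card_pos
  have := hA.sum_card
  rw [Fin.sum_univ_succ] at this
  omega

/-- Since `x, y ≥ 0`, the bound for `B = ∅` is at least as strong as the one for a singleton `B`. -/
lemma WPROP.weight_mul_le {n m : ℕ} {w : Fin n → ℝ} {A : Fin n → Finset (Fin m)} {x y : ℝ}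
    (hP : WPROP w (fun _ _ => (1 : ℝ)) A x y) (hw : ∀ i, 0 < w i) (hx : 0 ≤ x) (hy : 0 ≤ y)
    (i : Fin n) : w i * (m - n * x) ≤ ((A i).card + y) * ∑ j, w j := by
  obtain ⟨B, -, hB, hineq⟩ := hP i
  have hW : 0 < ∑ j, w j := by
    have : Nonempty (Fin n) := ⟨i⟩
    exact sum_pos (fun j _ => hw j) univ_nonempty
  rw [util_one, util_one, util_one, card_univ, Fintype.card_fin, ge_iff_le,
    div_le_div_iff₀ hW (hw i)] at hineq
  have hb : ((B.card : ℕ) : ℝ) ≤ 1 := by exact_mod_cast hB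
  have hb0 : (0 : ℝ) ≤ B.card := B.card.cast_nonneg
  have hnx : 0 ≤ (n : ℝ) * x := by positivity
  nlinarith [mul_nonneg (hw i).le (mul_nonneg hnx (sub_nonneg.2 hb)),
    mul_nonneg (mul_nonneg hy (sub_nonneg.2 hb)) hW.le]

lemma exists_heavy_light_params {x x' y y' : ℝ} (hx : x ≤ 1) (hx' : 0 ≤ x') (hy : 0 ≤ y) (hy' : y' ≤ 1)
    (h : x' + y < 1) :
    ∃ (k m : ℕ) (v : ℝ), 1 ≤ k ∧ 0 < v ∧ (k + 1) * x + y * (v + k) < m ∧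
      (m - k + y') * (v + k) < v * (m - (k + 1) * x') := by
  set δ := 1 - x' - y with hδ_def
  have hδ : 0 < δ := by linarith
  obtain ⟨k, hk⟩ := exists_nat_gt (4 / δ)
  have hkδ : 4 < k * δ := (div_lt_iff₀ hδ).1 hk
  have hk1 : 1 ≤ k := by
    by_contra! hk0
    simp [Nat.lt_one_iff.1 hk0] at hkδ
    linarith
  -- the `m` items are a fraction `c` of the total weight `W`, halfway between `y` and `1 - x'`
  set c := y + δ / 2 with hc_def
  have hc : 0 < c := by positivity
  obtain ⟨m, hm⟩ := exists_nat_gt (2 * (k + 1) * c / δ)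
  set W := m / c with hW_def
  have hmW : (m : ℝ) = c * W := by rw [hW_def, mul_div_cancel₀ _ hc.ne']
  have hδW : 2 * (k + 1) < δ * W := by
    rw [hW_def, mul_div_assoc', lt_div_iff₀ hc, mul_comm δ, ← div_lt_iff₀ hδ]
    exact hm
  refine ⟨k, m, W - k, hk1, by nlinarith, ?_, ?_⟩
  · rw [sub_add_cancel, hmW]
    nlinarith
  · have key : (W - k) * (m - (k + 1) * x') - (m - k + y') * W =
        W * (k * δ / 2 - x' - y') + k * (k + 1) * x' := by
      rw [hmW, hc_def, hδ_def]; ring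
    rw [sub_add_cancel]
    have : 0 < W * (k * δ / 2 - x' - y') := mul_pos (by nlinarith) (by linarith)
    have : 0 ≤ (k : ℝ) * (k + 1) * x' := by positivity
    linarith

lemma exists_instance_of_add_lt {x x' y y' : ℝ} (hx₀ : 0 ≤ x) (hx₁ : x ≤ 1) (hx' : 0 ≤ x')
    (hy : 0 ≤ y) (hy'₀ : 0 ≤ y') (hy'₁ : y' ≤ 1) (h : x' + y < 1) :
    ∃ (n m : ℕ) (w : Fin n → ℝ), 2 ≤ n ∧ (∀ i, 0 < w i) ∧
      ∀ A : Fin n → Finset (Fin m), IsAllocation A →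
        ¬(WPROP w (fun _ _ => (1 : ℝ)) A x y ∧ WPROP w (fun _ _ => (1 : ℝ)) A x' y') := by
  obtain ⟨k, m, v, hk, hv, hlight, hheavy⟩ := exists_heavy_light_params hx₁ hx' hy hy'₁ h
  let w : Fin (k + 1) → ℝ := Fin.cons v fun _ => 1
  have hw : ∀ i, 0 < w i := Fin.cases hv fun _ => one_pos
  have hW : ∑ j, w j = v + k := by simp [w, Fin.sum_cons]
  refine ⟨k + 1, m, w, by omega, hw, fun A hA ⟨hP, hP'⟩ => ?_⟩
  have hne (j : Fin k) : (A j.succ).Nonempty := by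
    have := hP.weight_mul_le hw hx₀ hy j.succ
    simp only [w, Fin.cons_succ, hW, Nat.cast_add, Nat.cast_one, one_mul] at this
    rw [← card_pos]
    by_contra h0
    simp only [not_lt, nonpos_iff_eq_zero] at h0
    rw [h0, Nat.cast_zero, zero_add] at this
    linarith
  have hcard : ((A 0).card : ℝ) ≤ m - k := by
    have := hA.card_zero_add_le hne
    rw [le_sub_iff_add_le]
    exact_mod_cast this
  have := hP'.weight_mul_le hw hx' hy'₀ 0
  simp only [w, Fin.cons_zero, hW, Nat.cast_add, Nat.cast_one] at this
  have := mul_le_mul_of_nonneg_right (add_le_add_right hcard y') (by positivity : (0 : ℝ) ≤ v + k)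
  linarith

/-- If x' + y < 1 or x + y' < 1, there is an identical-item instance in which
no allocation satisfies both WPROP(x,y) and WPROP(x',y'). -/
theorem wprop_incompatible (x x' y y' : ℝ)
    (hx : x ∈ Set.Icc (0 : ℝ) 1) (hx' : x' ∈ Set.Icc (0 : ℝ) 1)
    (hy : y ∈ Set.Icc (0 : ℝ) 1) (hy' : y' ∈ Set.Icc (0 : ℝ) 1)
    (h : x' + y < 1 ∨ x + y' < 1) :
    ∃ (n m : ℕ) (w : Fin n → ℝ), 2 ≤ n ∧ (∀ i, 0 < w i) ∧
      ∀ A : Fin n → Finset (Fin m), IsAllocation A →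
        ¬(WPROP w (fun _ _ => (1 : ℝ)) A x y ∧ WPROP w (fun _ _ => (1 : ℝ)) A x' y') := by
  rcases h with h | h
  · exact exists_instance_of_add_lt hx.1 hx.2 hx'.1 hy.1 hy'.1 hy'.2 h
  · obtain ⟨n, m, w, hn, hw, hA⟩ := exists_instance_of_add_lt hx'.1 hx'.2 hx.1 hy'.1 hy.1 hy.2 h
    exact ⟨n, m, w, hn, hw, fun A hAl hc => hA A hAl hc.symm⟩
end

section
/- For every n ≥ 3 and every α > 0, there exists an instance with n agents and an allocation in it that is NMMS-fair (i.e., 1-NMMS) but not α-WMMS. -/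
open Finset

/-!
Only agent `i` values anything. Of the `n + 1` items, item `k < n` is worth the weight `w k` to
her and the last item is worth `α / 2`; the weights are `1`, except for one agent `h ≠ i` of huge
weight `T = 2n(n + 1)/α`. As `n ≥ 3`, every partition has a bundle missing both item `h` and the
last item, so `MMS_i ≤ n + 1` and `NMMS_i ≤ n(n + 1)/T = α/2`: giving `i` only the last item is
NMMS-fair (all other shares are `0`). Yet handing item `k` to each agent `k` shows
`WMMS_i ≥ w i = 1`, so that bundle is worth less than `α · WMMS_i`.
-/

section Shares

variable {n m : ℕ}

def allocOfOwner (f : Fin m → Fin n) (j : Fin n) : Finset (Fin m) :=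
  univ.filter (f · = j)

@[simp]
lemma mem_allocOfOwner {f : Fin m → Fin n} {j : Fin n} {g : Fin m} :
    g ∈ allocOfOwner f j ↔ f g = j := by
  simp [allocOfOwner]

lemma isAllocation_allocOfOwner (f : Fin m → Fin n) : IsAllocation (allocOfOwner f) :=
  ⟨fun i j hij => disjoint_left.mpr fun g hi hj => hij ((mem_allocOfOwner.mp hi).symm.trans
    (mem_allocOfOwner.mp hj)), by ext g; simp⟩

namespace IsAllocation

variable {Z : Fin n → Finset (Fin m)}

lemma exists_mem (hZ : IsAllocation Z) (g : Fin m) : ∃ j, g ∈ Z j := by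
  simpa using (hZ.2.symm ▸ mem_univ g : g ∈ univ.biUnion Z)

lemma eq_of_mem (hZ : IsAllocation Z) {g : Fin m} {j k : Fin n} (hj : g ∈ Z j) (hk : g ∈ Z k) :
    j = k := by
  by_contra hjk
  exact disjoint_left.mp (hZ.1 j k hjk) hj hk

lemma exists_disjoint (hZ : IsAllocation Z) {S : Finset (Fin m)} (hS : S.card < n) :
    ∃ j, Disjoint (Z j) S := by
  choose owner howner using hZ.exists_mem
  obtain ⟨j, -, hj⟩ := exists_mem_notMem_of_card_lt_card (s := S.image owner) (t := univ)
    (by simpa using card_image_le.trans_lt hS)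
  refine ⟨j, disjoint_left.mpr fun g hgj hgS => hj ?_⟩
  rw [hZ.eq_of_mem hgj (howner g)]
  exact mem_image_of_mem owner hgS

end IsAllocation

variable {u : Fin n → Fin m → ℝ} {i : Fin n}

lemma MMS_le_of_forall_exists_le {c : ℝ}
    (h : ∀ Z : Fin n → Finset (Fin m), IsAllocation Z → ∃ j, util u i (Z j) ≤ c) :
    MMS u i ≤ c := by
  refine csSup_le ⟨_, allocOfOwner (fun _ => i), isAllocation_allocOfOwner _, rfl⟩ ?_
  rintro v ⟨Z, hZ, rfl⟩
  obtain ⟨j, hj⟩ := h Z hZ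
  exact (ciInf_le (Set.finite_range _).bddBelow j).trans hj

lemma MMS_le_util_compl (hu : ∀ g, 0 ≤ u i g) {S : Finset (Fin m)} (hS : S.card < n) :
    MMS u i ≤ util u i Sᶜ :=
  MMS_le_of_forall_exists_le fun _ hZ =>
    (hZ.exists_disjoint hS).imp fun _ hj =>
      sum_le_sum_of_subset_of_nonneg (subset_compl_iff_disjoint_right.mpr hj) fun g _ _ => hu g

lemma MMS_nonpos_of_eq_zero (hu : ∀ g, u i g = 0) : MMS u i ≤ 0 :=
  MMS_le_of_forall_exists_le fun _ _ => ⟨i, by simp [util, hu]⟩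

lemma NMMS_le_of_MMS_le {w : Fin n → ℝ} (hw : ∀ j, 0 ≤ w j) {c : ℝ} (h : MMS u i ≤ c) :
    NMMS w u i ≤ w i / (∑ j, w j) * n * c := by
  unfold NMMS
  have : 0 ≤ w i / ∑ j, w j := div_nonneg (hw i) (sum_nonneg fun j _ => hw j)
  gcongr

lemma le_WMMS {w : Fin n → ℝ} (hw : ∀ j, 0 < w j) (hu : ∀ g, 0 ≤ u i g)
    {Z : Fin n → Finset (Fin m)} (hZ : IsAllocation Z) {c : ℝ}
    (hc : ∀ j, c ≤ util u i (Z j) / w j) : w i * c ≤ WMMS w u i := by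
  have : Nonempty (Fin n) := ⟨i⟩
  refine mul_le_mul_of_nonneg_left ((le_ciInf hc).trans (le_csSup ⟨util u i univ / w i, ?_⟩
    ⟨Z, hZ, rfl⟩)) (hw i).le
  rintro v ⟨Y, -, rfl⟩
  refine (ciInf_le (Set.finite_range _).bddBelow i).trans ?_
  gcongr
  · exact (hw i).le
  · exact sum_le_sum_of_subset_of_nonneg (subset_univ _) fun g _ _ => hu g

end Shares

section SingleValuation

variable {n : ℕ} {i h : Fin n} {w : Fin n → ℝ} {ε : ℝ}

def singleValuation (i : Fin n) (w : Fin n → ℝ) (ε : ℝ) : Fin n → Fin (n + 1) → ℝ :=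
  Pi.single i (Fin.snoc w ε)

@[simp]
lemma singleValuation_self_castSucc (k : Fin n) : singleValuation i w ε i k.castSucc = w k := by
  simp [singleValuation]

@[simp]
lemma singleValuation_self_last : singleValuation i w ε i (Fin.last n) = ε := by
  simp [singleValuation]

lemma singleValuation_of_ne {j : Fin n} (hj : j ≠ i) (g : Fin (n + 1)) :
    singleValuation i w ε j g = 0 := by
  simp [singleValuation, hj]

lemma singleValuation_nonneg (hw : ∀ j, 0 ≤ w j) (hε : 0 ≤ ε) (j : Fin n) (g : Fin (n + 1)) :
    0 ≤ singleValuation i w ε j g := by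
  rcases eq_or_ne j i with rfl | hj
  · cases g using Fin.lastCases <;> simp [hw, hε]
  · simp [singleValuation_of_ne hj]

lemma le_WMMS_singleValuation (hw : ∀ j, 0 < w j) (hε : 0 ≤ ε) :
    w i ≤ WMMS w (singleValuation i w ε) i := by
  have hu := singleValuation_nonneg (i := i) (fun j => (hw j).le) hε i
  have hmem (j : Fin n) : j.castSucc ∈ allocOfOwner (Fin.snoc id i) j := by simp
  simpa using le_WMMS hw hu (isAllocation_allocOfOwner (Fin.snoc id i)) (c := 1)
    fun j => (one_le_div (hw j)).2 <| by
      simpa [util] using single_le_sum (fun g _ => hu g) (hmem j)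

lemma MMS_singleValuation_le (hn : 3 ≤ n) (hw : ∀ j, 0 ≤ w j) (hw1 : ∀ j ≠ h, w j ≤ 1)
    (hε : 0 ≤ ε) : MMS (singleValuation i w ε) i ≤ n + 1 := by
  set S : Finset (Fin (n + 1)) := {h.castSucc, Fin.last n}
  have hS : S.card < n := card_le_two.trans_lt (by omega)
  refine (MMS_le_util_compl (singleValuation_nonneg hw hε i) hS).trans ?_
  have hle : ∀ g ∈ Sᶜ, singleValuation i w ε i g ≤ 1 := by
    intro g hg
    cases g using Fin.lastCases with
    | last => simp [S] at hg
    | cast k => simpa using hw1 k (by simpa [S] using hg)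
  calc util (singleValuation i w ε) i Sᶜ ≤ Sᶜ.card • (1 : ℝ) := sum_le_card_nsmul _ _ _ hle
    _ ≤ n + 1 := by simpa using (Nat.cast_le (α := ℝ)).2 (card_le_univ Sᶜ)

lemma util_singleValuation_allocOfOwner_snoc_const (hih : i ≠ h) :
    util (singleValuation i w ε) i (allocOfOwner (Fin.snoc (fun _ => h) i) i) = ε := by
  have hA : allocOfOwner (Fin.snoc (fun _ => h) i) i = {Fin.last n} := by
    ext g
    cases g using Fin.lastCases <;> simp [hih.symm, Fin.castSucc_ne_last]
  rw [hA, util, sum_singleton, singleValuation_self_last]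

lemma NMMS_singleValuation_le (hn : 3 ≤ n) (hih : i ≠ h) (hw : ∀ j, 0 < w j)
    (hw1 : ∀ j ≠ h, w j ≤ 1) (hε : 0 ≤ ε) (hwh : n * (n + 1) ≤ ε * w h) (j : Fin n) :
    NMMS w (singleValuation i w ε) j ≤
      util (singleValuation i w ε) j (allocOfOwner (Fin.snoc (fun _ => h) i) j) := by
  have hw0 (k : Fin n) : 0 ≤ w k := (hw k).le
  rcases eq_or_ne j i with rfl | hj
  · rw [util_singleValuation_allocOfOwner_snoc_const hih]
    have hW : w h ≤ ∑ k, w k := single_le_sum (fun k _ => hw0 k) (mem_univ h)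
    calc NMMS w _ j ≤ w j / (∑ k, w k) * n * (n + 1) :=
          NMMS_le_of_MMS_le hw0 (MMS_singleValuation_le hn hw0 hw1 hε)
      _ ≤ 1 / w h * n * (n + 1) := by gcongr; exacts [hw h, hw1 j hih]
      _ ≤ ε := by rw [div_mul_eq_mul_div, div_mul_eq_mul_div, div_le_iff₀ (hw h)]; linarith
  · calc NMMS w _ j ≤ w j / (∑ k, w k) * n * 0 :=
          NMMS_le_of_MMS_le hw0 (MMS_nonpos_of_eq_zero (singleValuation_of_ne hj))
      _ = 0 := mul_zero _
      _ ≤ _ := sum_nonneg fun g _ => singleValuation_nonneg hw0 hε j g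

end SingleValuation

/-- For n ≥ 3, NMMS-fairness does not imply any positive approximation of WMMS. -/
theorem nmms_no_approx_wmms (n : ℕ) (hn : 3 ≤ n) (α : ℝ) (hα : 0 < α) :
    ∃ (m : ℕ) (w : Fin n → ℝ) (u : Fin n → Fin m → ℝ) (A : Fin n → Finset (Fin m)),
      (∀ i, 0 < w i) ∧ (∀ i g, 0 ≤ u i g) ∧ IsAllocation A ∧
      (∀ i, util u i (A i) ≥ NMMS w u i) ∧
      ¬ ∀ i, util u i (A i) ≥ α * WMMS w u i := by
  obtain ⟨i, h, hih⟩ : ∃ i h : Fin n, i ≠ h :=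
    ⟨⟨0, by omega⟩, ⟨1, by omega⟩, by simp [Fin.ext_iff]⟩
  set T : ℝ := 2 * n * (n + 1) / α
  set w : Fin n → ℝ := Function.update 1 h T
  have hT : 0 < T := by positivity
  have hw (j : Fin n) : 0 < w j := by
    rcases eq_or_ne j h with rfl | hj <;> simp [w, *]
  have hw1 (j : Fin n) (hj : j ≠ h) : w j ≤ 1 := by simp [w, hj]
  have hwh : n * (n + 1) ≤ α / 2 * w h := by simp [w, T, field]
  refine ⟨n + 1, w, singleValuation i w (α / 2), allocOfOwner (Fin.snoc (fun _ => h) i), hw,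
    singleValuation_nonneg (fun j => (hw j).le) (by positivity), isAllocation_allocOfOwner _,
    NMMS_singleValuation_le hn hih hw hw1 (by positivity) hwh, fun hfair => ?_⟩
  have hWMMS := le_WMMS_singleValuation (i := i) hw (ε := α / 2) (by positivity)
  have hfair_i := hfair i
  rw [util_singleValuation_allocOfOwner_snoc_const hih] at hfair_i
  simp only [w, Function.update_of_ne hih, Pi.one_apply] at hWMMS
  linarith [mul_le_mul_of_nonneg_left hWMMS hα.le]
end

section
/- For every x ∈ [0,1], every y ∈ (0,1], and every α > 0, there exists an instance in which all agents have the same utility function, together with an allocation that satisfies WEF(x,y) but is not α-NMMS. -/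
/-!
Two agents value each of two items at 1, and agent 0, of weight 1, receives both. Agent 1 has
weight `y / 2`, so a `y`-fraction of one item already gives it value `2` per unit of weight, as
much as agent 0's bundle: the allocation is WEF(x,y) for every `x ≥ 0`. Yet agent 1 receives
nothing while its maximin share is `1` (one item each), so no positive fraction of its NMMS is
guaranteed.
-/

open Finset

theorem util_const {n m : ℕ} (c : ℝ) (i : Fin n) (S : Finset (Fin m)) :
    util (fun _ _ => c) i S = S.card * c := by
  simp [util]

theorem util_empty {n m : ℕ} (u : Fin n → Fin m → ℝ) (i : Fin n) : util u i ∅ = 0 :=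
  Finset.sum_empty

theorem isAllocation_singleton {n : ℕ} : IsAllocation (fun i : Fin n => ({i} : Finset (Fin n))) :=
  ⟨fun _ _ hij => Finset.disjoint_singleton.2 hij, by ext; simp⟩

theorem isAllocation_ite_univ {n m : ℕ} (k : Fin n) :
    IsAllocation (fun j => if j = k then (Finset.univ : Finset (Fin m)) else ∅) := by
  refine ⟨fun i j hij => ?_, ?_⟩
  · by_cases hi : i = k
    · simp [hi, Ne.symm (hi ▸ hij)]
    · simp [hi]
  · ext g; simpa using ⟨k, by simp⟩

theorem iInf_util_le_MMS {n m : ℕ} [NeZero n] {u : Fin n → Fin m → ℝ} {i : Fin n}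
    (hu : ∀ g, 0 ≤ u i g) {Z : Fin n → Finset (Fin m)} (hZ : IsAllocation Z) :
    ⨅ j, util u i (Z j) ≤ MMS u i := by
  refine le_csSup ⟨util u i Finset.univ, ?_⟩ ⟨Z, hZ, rfl⟩
  rintro v ⟨Z', -, rfl⟩
  calc ⨅ j, util u i (Z' j) ≤ util u i (Z' 0) := ciInf_le (Set.finite_range _).bddBelow 0
    _ ≤ util u i Finset.univ :=
      Finset.sum_le_sum_of_subset_of_nonneg (Finset.subset_univ _) fun g _ _ => hu g

theorem one_le_MMS_one {n : ℕ} [NeZero n] (i : Fin n) :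
    1 ≤ MMS (fun (_ : Fin n) (_ : Fin n) => (1 : ℝ)) i := by
  simpa [util_const] using
    iInf_util_le_MMS (u := fun _ _ => 1) (i := i) (fun _ => zero_le_one) isAllocation_singleton

theorem NMMS_pos {n m : ℕ} [NeZero n] {w : Fin n → ℝ} (hw : ∀ j, 0 < w j)
    {u : Fin n → Fin m → ℝ} {i : Fin n} (hMMS : 0 < MMS u i) : 0 < NMMS w u i := by
  have hsum : 0 < ∑ j, w j := Finset.sum_pos (fun j _ => hw j) Finset.univ_nonempty
  have hn : (0 : ℝ) < n := Nat.cast_pos.2 (Nat.pos_of_neZero n)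
  have hwi := hw i
  unfold NMMS
  positivity

theorem not_forall_util_ge_NMMS_of_empty {n m : ℕ} {w : Fin n → ℝ} {u : Fin n → Fin m → ℝ}
    {A : Fin n → Finset (Fin m)} {α : ℝ} (hα : 0 < α) {i : Fin n} (hA : A i = ∅)
    (hN : 0 < NMMS w u i) : ¬ ∀ i, util u i (A i) ≥ α * NMMS w u i := fun h => by
  have := h i
  rw [hA, util_empty] at this
  nlinarith [mul_pos hα hN]

theorem WEF_all_to_zero {x y : ℝ} (hx : 0 ≤ x) (hy : 0 < y) :
    WEF ![1, y / 2] (fun (_ : Fin 2) (_ : Fin 2) => (1 : ℝ))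
      (fun j => if j = 0 then Finset.univ else ∅) x y := by
  intro i j
  fin_cases i <;> fin_cases j
  · exact ⟨∅, Finset.empty_subset _, by simp, by simp [util_empty]⟩
  · refine ⟨∅, Finset.empty_subset _, by simp, ?_⟩
    simp [util_const]
  · refine ⟨{0}, by simp, by simp, ?_⟩
    simp [util_const]
    rw [div_div_cancel₀ hy.ne']
    linarith
  · exact ⟨∅, Finset.empty_subset _, by simp, by simp [util_empty]⟩

/-- For x ∈ [0,1], y ∈ (0,1], α > 0, WEF(x,y) does not imply α-NMMS,
even with identical valuations. -/
theorem wef_no_approx_nmms (x y α : ℝ)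
    (hx : x ∈ Set.Icc (0 : ℝ) 1) (hy : y ∈ Set.Ioc (0 : ℝ) 1) (hα : 0 < α) :
    ∃ (n m : ℕ) (w : Fin n → ℝ) (u : Fin n → Fin m → ℝ) (A : Fin n → Finset (Fin m)),
      2 ≤ n ∧ (∀ i, 0 < w i) ∧ (∀ i g, 0 ≤ u i g) ∧
      (∀ i j : Fin n, u i = u j) ∧ IsAllocation A ∧
      WEF w u A x y ∧ ¬ ∀ i, util u i (A i) ≥ α * NMMS w u i := by
  have hw : ∀ i, 0 < (![1, y / 2] : Fin 2 → ℝ) i := by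
    simp [Fin.forall_fin_two, hy.1]
  refine ⟨2, 2, ![1, y / 2], fun _ _ => 1, fun j => if j = 0 then Finset.univ else ∅, le_rfl, hw,
    fun _ _ => zero_le_one, fun _ _ => rfl, isAllocation_ite_univ 0, WEF_all_to_zero hx.1 hy.1, ?_⟩
  exact not_forall_util_ge_NMMS_of_empty hα (i := 1) rfl
    (NMMS_pos hw (zero_lt_one.trans_le (one_le_MMS_one 1)))
end

section
/- For every x ∈ [0,1] and every α > 0, there exists an instance and an allocation in it that satisfies WEF(x, 1−x) but is not α-WMMS. -/
/-!
Take two agents with weights `1` and `W ≥ 1`. Agent `1` values nothing; agent `0` values three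
items at `1`, `W`, `W²` and receives only the first. Agent `0`'s envy towards agent `1` is
resolved by the `W²`-item, since `(1 - x) W² ≥ (1 - x) W`; yet the partition
`{W-item}, {1-item, W²-item}` shows that agent `0`'s weighted maximin share is at least `W`,
which exceeds `1 / α` once `W = 1 + 1 / α`.
-/

open Finset

def WEFToward {n m : ℕ} (w : Fin n → ℝ) (u : Fin n → Fin m → ℝ) (A : Fin n → Finset (Fin m))
    (x y : ℝ) (i j : Fin n) : Prop :=
  ∃ B : Finset (Fin m), B ⊆ A j ∧ B.card ≤ 1 ∧
    (util u i (A i) + y * util u i B) / w i ≥ (util u i (A j) - x * util u i B) / w j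

section General

variable {n m : ℕ} {w : Fin n → ℝ} {u : Fin n → Fin m → ℝ} {A : Fin n → Finset (Fin m)}
  {x y : ℝ}

theorem wefToward_self (i : Fin n) : WEFToward w u A x y i i :=
  ⟨∅, empty_subset _, by simp, by simp [util]⟩

theorem wefToward_of_util_eq_zero {i : Fin n} (hi : ∀ g, u i g = 0) (j : Fin n) :
    WEFToward w u A x y i j :=
  ⟨∅, empty_subset _, by simp, by simp [util, hi]⟩

theorem wef_of_wefToward_fin_two {w : Fin 2 → ℝ} {u : Fin 2 → Fin m → ℝ}
    {A : Fin 2 → Finset (Fin m)} (h01 : WEFToward w u A x y 0 1)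
    (h10 : WEFToward w u A x y 1 0) : WEF w u A x y := by
  intro i j
  fin_cases i <;> fin_cases j
  exacts [wefToward_self 0, h01, h10, wefToward_self 1]

theorem util_compl (i : Fin n) (S : Finset (Fin m)) :
    util u i Sᶜ = util u i univ - util u i S :=
  eq_sub_of_add_eq (sum_compl_add_sum S (u i))

theorem util_singleton (i : Fin n) (g : Fin m) : util u i {g} = u i g :=
  sum_singleton _ _

theorem isAllocation_compl (S : Finset (Fin m)) : IsAllocation ![S, Sᶜ] := by
  refine ⟨fun i j hij => ?_, ?_⟩
  · fin_cases i <;> fin_cases j <;> simp_all [disjoint_compl_right, disjoint_compl_left]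
  · ext g
    simp [Fin.exists_fin_two, em]

theorem le_wmms_of_isAllocation {i : Fin n} {Z : Fin n → Finset (Fin m)} (hZ : IsAllocation Z) (hw : 0 ≤ w i)
    {v : ℝ} (hv : ∀ j, v ≤ util u i (Z j) / w j) : w i * v ≤ WMMS w u i := by
  have : Nonempty (Fin n) := ⟨i⟩
  have hbdd : BddAbove {v : ℝ | ∃ Z : Fin n → Finset (Fin m), IsAllocation Z ∧
      v = ⨅ j, util u i (Z j) / w j} := by
    refine (Set.finite_range fun Z : Fin n → Finset (Fin m) => ⨅ j, util u i (Z j) / w j)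
      |>.subset ?_ |>.bddAbove
    rintro _ ⟨Z, -, rfl⟩
    exact ⟨Z, rfl⟩
  exact mul_le_mul_of_nonneg_left ((le_ciInf hv).trans (le_csSup hbdd ⟨Z, hZ, rfl⟩)) hw

end General

section Gap

def gapWeight (W : ℝ) : Fin 2 → ℝ := ![1, W]

def gapUtil (W : ℝ) : Fin 2 → Fin 3 → ℝ := ![![1, W, W ^ 2], 0]

def gapAlloc : Fin 2 → Finset (Fin 3) := ![{0}, {0}ᶜ]

variable {W : ℝ}

theorem gapWeight_pos (hW : 0 < W) (i : Fin 2) : 0 < gapWeight W i := by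
  fin_cases i
  exacts [one_pos, hW]

theorem gapUtil_nonneg (hW : 0 ≤ W) (i : Fin 2) (g : Fin 3) : 0 ≤ gapUtil W i g := by
  fin_cases i <;> fin_cases g <;> simp [gapUtil, hW]

theorem util_gapUtil_univ : util (gapUtil W) 0 univ = 1 + W + W ^ 2 := by
  simp [util, gapUtil, Fin.sum_univ_three]

theorem util_gapAlloc_zero : util (gapUtil W) 0 (gapAlloc 0) = 1 :=
  util_singleton _ _

theorem isAllocation_gapAlloc : IsAllocation gapAlloc :=
  isAllocation_compl _

theorem wef_gapAlloc {x : ℝ} (hW : 1 ≤ W) (hx : x ≤ 1) :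
    WEF (gapWeight W) (gapUtil W) gapAlloc x (1 - x) := by
  refine wef_of_wefToward_fin_two ⟨{2}, by decide, by simp, ?_⟩
    (wefToward_of_util_eq_zero (fun _ => rfl) 0)
  change (util (gapUtil W) 0 {0} + (1 - x) * util (gapUtil W) 0 {2}) / 1 ≥
    (util (gapUtil W) 0 {0}ᶜ - x * util (gapUtil W) 0 {2}) / W
  rw [util_compl, util_gapUtil_univ, util_singleton, util_singleton, ge_iff_le,
    div_le_div_iff₀ (by linarith) one_pos]
  change (1 + W + W ^ 2 - 1 - x * W ^ 2) * 1 ≤ (1 + (1 - x) * W ^ 2) * W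
  nlinarith [mul_nonneg (mul_nonneg (sub_nonneg.2 hx) (sub_nonneg.2 hW)) (sq_nonneg W)]

theorem le_wmms_gapUtil (hW : 0 < W) : W ≤ WMMS (gapWeight W) (gapUtil W) 0 := by
  have hcompl : W ≤ util (gapUtil W) 0 {1}ᶜ / W := by
    rw [util_compl, util_gapUtil_univ, util_singleton, le_div_iff₀ hW]
    change W * W ≤ 1 + W + W ^ 2 - W
    nlinarith
  have hsingle : W ≤ util (gapUtil W) 0 {1} / gapWeight W 0 := by
    rw [util_singleton]
    exact (div_one W).ge
  simpa [gapWeight] using le_wmms_of_isAllocation (u := gapUtil W) (isAllocation_compl {1})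
    (zero_le_one' ℝ) (Fin.forall_fin_two.2 ⟨hsingle, hcompl⟩)

end Gap

/-- For x ∈ [0,1] and α > 0, WEF(x,1−x) does not imply α-WMMS. -/
theorem wef_no_approx_wmms (x α : ℝ) (hx : x ∈ Set.Icc (0 : ℝ) 1) (hα : 0 < α) :
    ∃ (n m : ℕ) (w : Fin n → ℝ) (u : Fin n → Fin m → ℝ) (A : Fin n → Finset (Fin m)),
      2 ≤ n ∧ (∀ i, 0 < w i) ∧ (∀ i g, 0 ≤ u i g) ∧ IsAllocation A ∧
      WEF w u A x (1 - x) ∧ ¬ ∀ i, util u i (A i) ≥ α * WMMS w u i := by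
  set W := 1 + α⁻¹
  have hW : 1 ≤ W := le_add_of_nonneg_right (inv_nonneg.2 hα.le)
  refine ⟨2, 3, gapWeight W, gapUtil W, gapAlloc, le_rfl, gapWeight_pos (by linarith),
    gapUtil_nonneg (by linarith), isAllocation_gapAlloc, wef_gapAlloc hW hx.2, fun h => ?_⟩
  have hshare : 1 ≥ α * WMMS (gapWeight W) (gapUtil W) 0 := util_gapAlloc_zero (W := W) ▸ h 0
  have hgap : α * W ≤ α * WMMS (gapWeight W) (gapUtil W) 0 :=
    mul_le_mul_of_nonneg_left (le_wmms_gapUtil (by linarith)) hα.le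
  have hαW : α * W = α + 1 := by rw [mul_add, mul_inv_cancel₀ hα.ne', mul_one]
  linarith
end

section
/- Let all items be identical, with m ≥ n, and let A be an allocation maximizing Π_{i ∈ N} |A_i|^{w_i} over all allocations. Then for any two agents i and j, ⌊w_i·(|A_i| + |A_j|)/(w_i + w_j)⌋ ≤ |A_i| ≤ ⌈w_i·(|A_i| + |A_j|)/(w_i + w_j)⌉. -/
/-!
Moving one item from agent `i` to agent `j` in a maximizer `A` cannot increase the weighted Nash
welfare. Since `m ≥ n`, every bundle of `A` is nonempty, so the other factors cancel and
`(aᵢ - 1)^{wᵢ} (aⱼ + 1)^{wⱼ} ≤ aᵢ^{wᵢ} aⱼ^{wⱼ}` with `aₖ = |Aₖ|`. If `aᵢ` exceeded the ceiling of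
its quota, then `wᵢ (aⱼ + 1) ≤ wⱼ (aᵢ - 1)`, and the bounds `log (a / (a - 1)) < 1 / (a - 1)` and
`1 / (b + 1) < log ((b + 1) / b)` make this transfer strictly profitable. The floor bound is the
ceiling bound for the pair `(j, i)`, because the two quotas add up to `aᵢ + aⱼ`.
-/

open Finset

open Real

namespace Real

theorem log_sub_log_lt_div {x y : ℝ} (hx : 0 < x) (hxy : x < y) :
    log y - log x < (y - x) / x := by
  have h := log_lt_sub_one_of_pos (div_pos (hx.trans hxy) hx) (by
    rw [Ne, div_eq_one_iff_eq hx.ne']; exact hxy.ne')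
  rwa [log_div (hx.trans hxy).ne' hx.ne', div_sub_one hx.ne'] at h

theorem div_lt_log_sub_log {x y : ℝ} (hx : 0 < x) (hxy : x < y) :
    (y - x) / y < log y - log x := by
  have hy := hx.trans hxy
  have h := log_lt_sub_one_of_pos (div_pos hx hy) (by
    rw [Ne, div_eq_one_iff_eq hy.ne']; exact hxy.ne)
  rw [log_div hx.ne' hy.ne', div_sub_one hy.ne', ← neg_sub y x, neg_div] at h
  linarith

theorem rpow_mul_rpow_lt_of_transfer {p q a b : ℝ} (hp : 0 < p) (hq : 0 < q) (hb : 0 < b)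
    (h : p * (b + 1) ≤ q * (a - 1)) :
    a ^ p * b ^ q < (a - 1) ^ p * (b + 1) ^ q := by
  have ha : 0 < a - 1 := pos_of_mul_pos_right ((mul_pos hp (by linarith)).trans_le h) hq.le
  have hlog : p * (log a - log (a - 1)) < q * (log (b + 1) - log b) :=
    calc p * (log a - log (a - 1)) < p * (1 / (a - 1)) := by
          have := log_sub_log_lt_div ha (sub_one_lt a)
          rw [sub_sub_cancel] at this
          exact mul_lt_mul_of_pos_left this hp
      _ ≤ q * (1 / (b + 1)) := by
          rw [mul_one_div, mul_one_div, div_le_div_iff₀ ha (by linarith)]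
          linarith
      _ < q * (log (b + 1) - log b) := by
          have := div_lt_log_sub_log hb (lt_add_one b)
          rw [add_sub_cancel_left] at this
          exact mul_lt_mul_of_pos_left this hq
  have ha0 : 0 < a := by linarith
  have hb1 : 0 < b + 1 := by linarith
  rw [← log_lt_log_iff (by positivity) (by positivity), log_mul (by positivity) (by positivity),
    log_mul (by positivity) (by positivity), log_rpow ha0, log_rpow hb, log_rpow ha, log_rpow hb1]
  linarith

end Real

theorem Finset.mul_le_mul_of_prod_le_prod {ι R : Type*} [Fintype ι] [DecidableEq ι]
    [CommRing R] [LinearOrder R] [IsStrictOrderedRing R] {f g : ι → R} {i j : ι} (hij : i ≠ j)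
    (heq : ∀ k, k ≠ i → k ≠ j → f k = g k) (hpos : ∀ k, k ≠ i → k ≠ j → 0 < g k)
    (h : ∏ k, f k ≤ ∏ k, g k) :
    f i * f j ≤ g i * g j := by
  have hsplit : ∀ F : ι → R, ∏ k, F k = (F i * F j) * ∏ k ∈ {i, j}ᶜ, F k := fun F => by
    rw [← prod_pair hij, prod_mul_prod_compl]
  have hcompl : ∀ k ∈ ({i, j}ᶜ : Finset ι), k ≠ i ∧ k ≠ j := fun k hk => by
    simpa [not_or] using hk
  rw [hsplit f, hsplit g, prod_congr rfl fun k hk => heq k (hcompl k hk).1 (hcompl k hk).2] at h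
  exact le_of_mul_le_mul_right h (prod_pos fun k hk => hpos k (hcompl k hk).1 (hcompl k hk).2)

variable {n m : ℕ}

def bundles (σ : Fin m → Fin n) : Fin n → Finset (Fin m) :=
  fun k => univ.filter (σ · = k)

theorem mem_bundles {σ : Fin m → Fin n} {g : Fin m} {k : Fin n} : g ∈ bundles σ k ↔ σ g = k := by
  simp [bundles]

theorem isAllocation_bundles (σ : Fin m → Fin n) : IsAllocation (bundles σ) := by
  refine ⟨fun k l hkl => disjoint_left.2 fun g hk hl => ?_, eq_univ_of_forall fun g => ?_⟩
  · exact hkl ((mem_bundles.1 hk).symm.trans (mem_bundles.1 hl))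
  · exact mem_biUnion.2 ⟨σ g, mem_univ _, mem_bundles.2 rfl⟩

theorem IsAllocation.exists_eq_bundles {A : Fin n → Finset (Fin m)} (hA : IsAllocation A) :
    ∃ σ : Fin m → Fin n, A = bundles σ := by
  have hcover : ∀ g, ∃ k, g ∈ A k := fun g => by
    simpa using (hA.2.symm ▸ mem_univ g : g ∈ univ.biUnion A)
  choose σ hσ using hcover
  refine ⟨σ, funext fun k => ext fun g => ⟨fun hg => mem_bundles.2 ?_, fun hg => ?_⟩⟩
  · by_contra hne
    exact disjoint_left.1 (hA.1 _ _ hne) (hσ g) hg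
  · exact mem_bundles.1 hg ▸ hσ g

theorem bundles_update (σ : Fin m → Fin n) (g : Fin m) (j k : Fin n) :
    bundles (Function.update σ g j) k =
      if k = j then insert g (bundles σ k) else (bundles σ k).erase g := by
  ext x
  by_cases hx : x = g <;> split_ifs with hk <;> simp [mem_bundles, hx, hk]
  exact Ne.symm hk

theorem exists_isAllocation_forall_nonempty [NeZero n] (hnm : n ≤ m) :
    ∃ Z : Fin n → Finset (Fin m), IsAllocation Z ∧ ∀ k, (Z k).Nonempty := by
  have hsurj := Function.invFun_surjective (Fin.castLE_injective hnm)
  refine ⟨bundles (Function.invFun (Fin.castLE hnm)), isAllocation_bundles _, fun k => ?_⟩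
  obtain ⟨g, hg⟩ := hsurj k
  exact ⟨g, mem_bundles.2 hg⟩

noncomputable def nashWelfare (w : Fin n → ℝ) (A : Fin n → Finset (Fin m)) : ℝ :=
  ∏ i, ((A i).card : ℝ) ^ w i

theorem nashWelfare_pos_iff {w : Fin n → ℝ} (hw : ∀ i, 0 < w i) {A : Fin n → Finset (Fin m)} :
    0 < nashWelfare w A ↔ ∀ i, (A i).Nonempty := by
  refine ⟨fun hpos i => ?_, fun hne => prod_pos fun i _ => ?_⟩
  · rw [← card_pos, Nat.pos_iff_ne_zero]
    intro h0
    refine hpos.ne' (prod_eq_zero (mem_univ i) ?_)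
    rw [h0, Nat.cast_zero, zero_rpow (hw i).ne']
  · exact rpow_pos_of_pos (Nat.cast_pos.2 (card_pos.2 (hne i))) _

def IsMaxNashWelfare (w : Fin n → ℝ) (A : Fin n → Finset (Fin m)) : Prop :=
  IsAllocation A ∧
    ∀ A' : Fin n → Finset (Fin m), IsAllocation A' → nashWelfare w A' ≤ nashWelfare w A

namespace IsMaxNashWelfare

variable {w : Fin n → ℝ} {A : Fin n → Finset (Fin m)}

theorem nonempty (hw : ∀ i, 0 < w i) (hA : IsMaxNashWelfare w A) (hnm : n ≤ m) (k : Fin n) :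
    (A k).Nonempty := by
  have : NeZero n := ⟨k.pos.ne'⟩
  obtain ⟨Z, hZ, hZne⟩ := exists_isAllocation_forall_nonempty hnm
  exact (nashWelfare_pos_iff hw).1 (((nashWelfare_pos_iff hw).2 hZne).trans_le (hA.2 Z hZ)) k

theorem transfer_le (hA : IsMaxNashWelfare w A) (hne : ∀ k, (A k).Nonempty)
    {i j : Fin n} (hij : i ≠ j) :
    (((A i).card : ℝ) - 1) ^ w i * (((A j).card : ℝ) + 1) ^ w j ≤
      ((A i).card : ℝ) ^ w i * ((A j).card : ℝ) ^ w j := by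
  obtain ⟨σ, rfl⟩ := hA.1.exists_eq_bundles
  obtain ⟨g, hg⟩ := hne i
  have hσg : σ g = i := mem_bundles.1 hg
  have hgk : ∀ k, k ≠ i → g ∉ bundles σ k := fun k hk hgk => hk (hσg ▸ mem_bundles.1 hgk).symm
  set σ' := Function.update σ g j
  have hi : ((bundles σ' i).card : ℝ) = (bundles σ i).card - 1 := by
    rw [bundles_update, if_neg hij, card_erase_of_mem hg,
      Nat.cast_sub (card_pos.2 ⟨g, hg⟩), Nat.cast_one]
  have hj : ((bundles σ' j).card : ℝ) = (bundles σ j).card + 1 := by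
    rw [bundles_update, if_pos rfl, card_insert_of_notMem (hgk j hij.symm), Nat.cast_succ]
  have hpair := mul_le_mul_of_prod_le_prod hij
    (f := fun k => ((bundles σ' k).card : ℝ) ^ w k) (g := fun k => ((bundles σ k).card : ℝ) ^ w k)
    (fun k hki hkj => by rw [bundles_update, if_neg hkj, erase_eq_of_notMem (hgk k hki)])
    (fun k _ _ => rpow_pos_of_pos (Nat.cast_pos.2 (card_pos.2 (hne k))) _)
    (hA.2 _ (isAllocation_bundles σ'))
  simpa only [hi, hj] using hpair

theorem card_le_ceil (hw : ∀ i, 0 < w i) (hA : IsMaxNashWelfare w A) (hnm : n ≤ m) (i j : Fin n) :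
    ((A i).card : ℤ) ≤ ⌈w i * (((A i).card : ℝ) + ((A j).card : ℝ)) / (w i + w j)⌉ := by
  have hne := hA.nonempty hw hnm
  have hwi := hw i
  have hwj := hw j
  have hb : (0 : ℝ) < (A j).card := Nat.cast_pos.2 (card_pos.2 (hne j))
  rw [Int.le_ceil_iff, Int.cast_natCast]
  by_contra! hquota
  have htransfer : w i * ((A j).card + 1) ≤ w j * ((A i).card - 1) := by
    rw [div_le_iff₀ (by positivity)] at hquota
    linarith
  obtain rfl | hij := eq_or_ne i j
  · linarith
  exact (hA.transfer_le hne hij).not_gt (rpow_mul_rpow_lt_of_transfer hwi hwj hb htransfer)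

theorem floor_le_card (hw : ∀ i, 0 < w i) (hA : IsMaxNashWelfare w A) (hnm : n ≤ m) (i j : Fin n) :
    ⌊w i * (((A i).card : ℝ) + ((A j).card : ℝ)) / (w i + w j)⌋ ≤ ((A i).card : ℤ) := by
  have hji := hA.card_le_ceil hw hnm j i
  rw [Int.le_ceil_iff, Int.cast_natCast] at hji
  rw [Int.floor_le_iff, Int.cast_natCast]
  have hsum : w i * (((A i).card : ℝ) + (A j).card) / (w i + w j) =
      (A i).card + (A j).card - w j * (((A j).card : ℝ) + (A i).card) / (w j + w i) := by
    have := hw i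
    have := hw j
    field_simp
    ring
  linarith

end IsMaxNashWelfare

theorem mwnw_pairwise_quota_general (n m : ℕ) (hm : n ≤ m)
    (w : Fin n → ℝ) (hw : ∀ i, 0 < w i)
    (A : Fin n → Finset (Fin m)) (hA : IsAllocation A)
    (hmax : ∀ A' : Fin n → Finset (Fin m), IsAllocation A' →
      ∏ i, ((A' i).card : ℝ) ^ (w i) ≤ ∏ i, ((A i).card : ℝ) ^ (w i))
    (i j : Fin n) :
    ⌊w i * (((A i).card : ℝ) + ((A j).card : ℝ)) / (w i + w j)⌋ ≤ ((A i).card : ℤ) ∧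
      ((A i).card : ℤ) ≤ ⌈w i * (((A i).card : ℝ) + ((A j).card : ℝ)) / (w i + w j)⌉ := by
  have hmwnw : IsMaxNashWelfare w A := ⟨hA, hmax⟩
  exact ⟨hmwnw.floor_le_card hw hm i j, hmwnw.card_le_ceil hw hm i j⟩

/-- With identical items and m ≥ n, in any allocation maximizing the weighted Nash
welfare Π_i |A_i|^{w_i}, for any two agents i, j we have
⌊w_i·(a_i+a_j)/(w_i+w_j)⌋ ≤ a_i ≤ ⌈w_i·(a_i+a_j)/(w_i+w_j)⌉. -/
theorem mwnw_pairwise_quota (n m : ℕ) (hn : 2 ≤ n) (hm : n ≤ m)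
    (w : Fin n → ℝ) (hw : ∀ i, 0 < w i)
    (A : Fin n → Finset (Fin m)) (hA : IsAllocation A)
    (hmax : ∀ A' : Fin n → Finset (Fin m), IsAllocation A' →
      ∏ i, ((A' i).card : ℝ) ^ (w i) ≤ ∏ i, ((A i).card : ℝ) ^ (w i))
    (i j : Fin n) :
    ⌊w i * (((A i).card : ℝ) + ((A j).card : ℝ)) / (w i + w j)⌋ ≤ ((A i).card : ℤ) ∧
      ((A i).card : ℤ) ≤ ⌈w i * (((A i).card : ℝ) + ((A j).card : ℝ)) / (w i + w j)⌉ :=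
  mwnw_pairwise_quota_general n m hm w hw A hA hmax i j
end
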